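/- Let A and B be positive definite real n×n matrices. For a nonzero eigenvector w ∈ ℝⁿ of B^{-1/2} A⁻¹ B^{-1/2} with eigenvalue λ > 0, write w̃ ∈ ℂ^{2n} for the vector whose first n entries are (i/√λ) · A^{-1/2} B^{-1/2} w and whose last n entries are w. Then: (1) for any two such eigenvectors w₁, w₂ (with eigenvalues λ₁, λ₂) satisfying w₁ᵀ w₂ = 0, the Hermitian inner products ⟨w̃₁, w̃₂⟩ and ⟨w̃₁, w̃₂*⟩ both vanish, where w̃₂* is the entrywise complex conjugate; and (2) for any single such eigenvector w, ⟨w̃, w̃*⟩ = 0. -/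

import Mathlib

open Matrix

/-- The square root of a positive semidefinite matrix, as `Matrix.PosSemidef.sqrt` was defined
in the older Mathlib (removed since). -/
noncomputable def Matrix.PosSemidef.sqrt {n 𝕜 : Type*} [Fintype n] [DecidableEq n] [RCLike 𝕜]
    [PartialOrder 𝕜]
    {A : Matrix n n 𝕜} (hA : A.PosSemidef) : Matrix n n 𝕜 :=
  (hA.1.eigenvectorUnitary : Matrix n n 𝕜) * diagonal ((↑) ∘ Real.sqrt ∘ hA.1.eigenvalues) *
    (star (hA.1.eigenvectorUnitary : Matrix n n 𝕜))

/-- The standard Hermitian inner product `⟨u, w⟩ = Σₖ conj(uₖ) wₖ` on `ℂ^{2n}`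
(vectors indexed by `Fin n ⊕ Fin n`). -/
noncomputable def hermInner (n : ℕ) (u w : Fin n ⊕ Fin n → ℂ) : ℂ :=
  ∑ k, star (u k) * w k

/-!
Put `M = A^{-1/2} B^{-1/2}`, so that `Mᵀ M = B^{-1/2} A⁻¹ B^{-1/2}` and, for an eigenvector `w₂`
with eigenvalue `λ₂`, `(M w₁) ⬝ (M w₂) = λ₂ (w₁ ⬝ w₂)`. Splitting the Hermitian product of
`w̃ = (c M w, w)` along the two blocks therefore gives `⟨w̃₁, w̃₂⟩ = (c̄₁ c₂ λ₂ + 1) (w₁ ⬝ w₂)`,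
which vanishes with `w₁ ⬝ w₂`, while for `w̃₁` against its own conjugate the scalar is
`c̄₁² λ₁ + 1 = (-i/√λ₁)² λ₁ + 1 = 0`.
-/

namespace Matrix.PosSemidef

variable {ι : Type*} [Fintype ι] [DecidableEq ι] {A B : Matrix ι ι ℝ}

theorem transpose_sqrt (hA : A.PosSemidef) : hA.sqrtᵀ = hA.sqrt := by
  simp [sqrt, transpose_mul, star_eq_conjTranspose, conjTranspose_eq_transpose_of_trivial,
    mul_assoc]

theorem sqrt_mul_self (hA : A.PosSemidef) : hA.sqrt * hA.sqrt = A := by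
  set U : Matrix ι ι ℝ := (hA.1.eigenvectorUnitary : Matrix ι ι ℝ)
  set D : Matrix ι ι ℝ := diagonal ((RCLike.ofReal : ℝ → ℝ) ∘ Real.sqrt ∘ hA.1.eigenvalues)
  conv_rhs => rw [hA.1.spectral_theorem, Unitary.conjStarAlgAut_apply]
  calc hA.sqrt * hA.sqrt = U * (D * (star U * U) * D) * star U := by
        simp only [sqrt, U, D, mul_assoc]
    _ = _ := by
      rw [Unitary.coe_star_mul_self, mul_one, diagonal_mul_diagonal]
      congr 3
      funext i
      simp [Real.mul_self_sqrt (hA.eigenvalues_nonneg i)]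

theorem transpose_mul_self_inv_sqrt_mul_inv_sqrt (hA : A.PosSemidef) (hB : B.PosSemidef) :
    (hA.sqrt⁻¹ * hB.sqrt⁻¹)ᵀ * (hA.sqrt⁻¹ * hB.sqrt⁻¹) = hB.sqrt⁻¹ * A⁻¹ * hB.sqrt⁻¹ := by
  have hA_inv : hA.sqrt⁻¹ * hA.sqrt⁻¹ = A⁻¹ := by rw [← mul_inv_rev, hA.sqrt_mul_self]
  rw [transpose_mul, transpose_nonsing_inv, transpose_nonsing_inv, hA.transpose_sqrt,
    hB.transpose_sqrt, ← hA_inv]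
  noncomm_ring

end Matrix.PosSemidef

theorem Matrix.mulVec_dotProduct_mulVec {R m ι : Type*} [CommSemiring R] [Fintype m] [Fintype ι]
    (M : Matrix m ι R) (v x : ι → R) : M *ᵥ v ⬝ᵥ M *ᵥ x = v ⬝ᵥ (Mᵀ * M) *ᵥ x := by
  rw [← mulVec_mulVec, dotProduct_transpose_mulVec, dotProduct_comm]

noncomputable def liftVec {n : ℕ} (c : ℂ) (v x : Fin n → ℝ) : Fin n ⊕ Fin n → ℂ :=
  Sum.elim (fun i => c * v i) (fun i => x i)

theorem star_liftVec {n : ℕ} (c : ℂ) (v x : Fin n → ℝ) :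
    star (liftVec c v x) = liftVec (star c) v x := by
  funext k
  cases k <;> simp [liftVec, mul_comm]

theorem hermInner_liftVec {n : ℕ} (c₁ c₂ : ℂ) (v₁ v₂ x₁ x₂ : Fin n → ℝ) :
    hermInner n (liftVec c₁ v₁ x₁) (liftVec c₂ v₂ x₂) =
      star c₁ * c₂ * (v₁ ⬝ᵥ v₂ : ℝ) + (x₁ ⬝ᵥ x₂ : ℝ) := by
  simp only [hermInner, liftVec, Fintype.sum_sum_type, Sum.elim_inl, Sum.elim_inr,
    Complex.star_def, map_mul, Complex.conj_ofReal, dotProduct, Complex.ofReal_sum,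
    Complex.ofReal_mul, Finset.mul_sum]
  congr 1
  exact Finset.sum_congr rfl fun i _ => by ring

theorem hermInner_liftVec_mulVec {n : ℕ} {M : Matrix (Fin n) (Fin n) ℝ} {w₂ : Fin n → ℝ}
    {lam₂ : ℝ} (heig₂ : (Mᵀ * M) *ᵥ w₂ = lam₂ • w₂) (c₁ c₂ : ℂ) (w₁ : Fin n → ℝ) :
    hermInner n (liftVec c₁ (M *ᵥ w₁) w₁) (liftVec c₂ (M *ᵥ w₂) w₂) =
      (star c₁ * c₂ * lam₂ + 1) * (w₁ ⬝ᵥ w₂ : ℝ) := by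
  rw [hermInner_liftVec, mulVec_dotProduct_mulVec, heig₂, dotProduct_smul, smul_eq_mul,
    Complex.ofReal_mul]
  ring

theorem star_I_div_sqrt_mul_self_mul_add_one {lam : ℝ} (hlam : 0 < lam) :
    star (Complex.I / Real.sqrt lam) * star (Complex.I / Real.sqrt lam) * lam + 1 = 0 := by
  have hsqrt : (Real.sqrt lam : ℂ) * Real.sqrt lam = lam := by
    exact_mod_cast Real.mul_self_sqrt hlam.le
  have hlam' : (lam : ℂ) ≠ 0 := by exact_mod_cast hlam.ne'
  simp only [Complex.star_def, map_div₀, Complex.conj_I, Complex.conj_ofReal, div_mul_div_comm,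
    neg_mul_neg, Complex.I_mul_I, hsqrt]
  field_simp
  ring

theorem lifted_eigenvectors_orthogonality_general (n : ℕ) (A B : Matrix (Fin n) (Fin n) ℝ)
    (hA : A.PosDef) (hB : B.PosDef)
    (w₁ w₂ : Fin n → ℝ) (lam₁ lam₂ : ℝ)
    (hlam₁ : 0 < lam₁)
    (heig₁ : ((hB.posSemidef.sqrt)⁻¹ * A⁻¹ * (hB.posSemidef.sqrt)⁻¹).mulVec w₁ = lam₁ • w₁)
    (heig₂ : ((hB.posSemidef.sqrt)⁻¹ * A⁻¹ * (hB.posSemidef.sqrt)⁻¹).mulVec w₂ = lam₂ • w₂)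
    (t₁ t₂ : Fin n ⊕ Fin n → ℂ)
    (ht₁ : t₁ = Sum.elim
      (fun i => (Complex.I / (Real.sqrt lam₁ : ℂ)) *
        ((((hA.posSemidef.sqrt)⁻¹ * (hB.posSemidef.sqrt)⁻¹).mulVec w₁ i : ℝ) : ℂ))
      (fun i => ((w₁ i : ℝ) : ℂ)))
    (ht₂ : t₂ = Sum.elim
      (fun i => (Complex.I / (Real.sqrt lam₂ : ℂ)) *
        ((((hA.posSemidef.sqrt)⁻¹ * (hB.posSemidef.sqrt)⁻¹).mulVec w₂ i : ℝ) : ℂ))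
      (fun i => ((w₂ i : ℝ) : ℂ))) :
    ((∑ i, w₁ i * w₂ i = 0) →
      hermInner n t₁ t₂ = 0 ∧ hermInner n t₁ (star t₂) = 0) ∧
    hermInner n t₁ (star t₁) = 0 := by
  rw [← hA.posSemidef.transpose_mul_self_inv_sqrt_mul_inv_sqrt hB.posSemidef] at heig₁ heig₂
  change t₁ = liftVec _ _ w₁ at ht₁
  change t₂ = liftVec _ _ w₂ at ht₂
  subst ht₁ ht₂
  refine ⟨fun horth => ⟨?_, ?_⟩, ?_⟩
  · rw [hermInner_liftVec_mulVec heig₂, dotProduct, horth, Complex.ofReal_zero, mul_zero]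
  · rw [star_liftVec, hermInner_liftVec_mulVec heig₂, dotProduct, horth, Complex.ofReal_zero,
      mul_zero]
  · rw [star_liftVec, hermInner_liftVec_mulVec heig₁, star_I_div_sqrt_mul_self_mul_add_one hlam₁,
      zero_mul]

/-- Orthogonality relations among the lifted eigenvectors `w̃ = ((i/√λ)·A^{-1/2}B^{-1/2}w, w)`:
(1) if `w₁ᵀ w₂ = 0` then `⟨w̃₁, w̃₂⟩ = 0` and `⟨w̃₁, w̃₂*⟩ = 0`;
(2) for any single such eigenvector, `⟨w̃₁, w̃₁*⟩ = 0`. -/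
theorem lifted_eigenvectors_orthogonality (n : ℕ) (A B : Matrix (Fin n) (Fin n) ℝ)
    (hA : A.PosDef) (hB : B.PosDef)
    (w₁ w₂ : Fin n → ℝ) (hw₁ : w₁ ≠ 0) (hw₂ : w₂ ≠ 0) (lam₁ lam₂ : ℝ)
    (hlam₁ : 0 < lam₁) (hlam₂ : 0 < lam₂)
    (heig₁ : ((hB.posSemidef.sqrt)⁻¹ * A⁻¹ * (hB.posSemidef.sqrt)⁻¹).mulVec w₁ = lam₁ • w₁)
    (heig₂ : ((hB.posSemidef.sqrt)⁻¹ * A⁻¹ * (hB.posSemidef.sqrt)⁻¹).mulVec w₂ = lam₂ • w₂)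
    (t₁ t₂ : Fin n ⊕ Fin n → ℂ)
    (ht₁ : t₁ = Sum.elim
      (fun i => (Complex.I / (Real.sqrt lam₁ : ℂ)) *
        ((((hA.posSemidef.sqrt)⁻¹ * (hB.posSemidef.sqrt)⁻¹).mulVec w₁ i : ℝ) : ℂ))
      (fun i => ((w₁ i : ℝ) : ℂ)))
    (ht₂ : t₂ = Sum.elim
      (fun i => (Complex.I / (Real.sqrt lam₂ : ℂ)) *
        ((((hA.posSemidef.sqrt)⁻¹ * (hB.posSemidef.sqrt)⁻¹).mulVec w₂ i : ℝ) : ℂ))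
      (fun i => ((w₂ i : ℝ) : ℂ))) :
    ((∑ i, w₁ i * w₂ i = 0) →
      hermInner n t₁ t₂ = 0 ∧ hermInner n t₁ (star t₂) = 0) ∧
    hermInner n t₁ (star t₁) = 0 :=
  lifted_eigenvectors_orthogonality_general n A B hA hB w₁ w₂ lam₁ lam₂ hlam₁ heig₁ heig₂ t₁ t₂ ht₁
    ht₂
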